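/- There exist parameters μ > 0, Δ > 0, n ≥ 1 and sample sizes 0 < m₁ < m₂ such that g(m₁) < g(0) and g(m₂) > g(0), where g(m) = ½[Φ((mΔ − (n+m)μ)/√((n+m)(n+m+1))) + Φ((−mΔ − (n+m)μ)/√((n+m)(n+m+1)))]. That is, the target generalization error is non-monotonic in the number of OOD samples. -/

import Mathlib

open MeasureTheory Real Filter
open scoped NNReal ENNReal
noncomputable def phi (x : ℝ) : ℝ := (Real.sqrt (2*Real.pi))⁻¹ * Real.exp (-x^2/2)
noncomputable def Phi (t : ℝ) : ℝ := ∫ x in Set.Iio t, phi x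

lemma phi_nonneg (x : ℝ) : 0 ≤ phi x := by unfold phi; positivity

lemma integrable_phi : Integrable phi := by
  have h := (integrable_exp_neg_mul_sq (by norm_num : (0:ℝ) < 1/2)).const_mul
      (Real.sqrt (2*Real.pi))⁻¹
  refine Integrable.congr h ?_
  filter_upwards with x
  unfold phi
  congr 1
  ring

lemma phi_ii (a b : ℝ) : IntervalIntegrable phi volume a b :=
  integrable_phi.intervalIntegrable

lemma Phi_eq_Iic (t : ℝ) : Phi t = ∫ x in Set.Iic t, phi x := by
  unfold Phi
  exact setIntegral_congr_set Iio_ae_eq_Iic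

lemma Phi_add {a b : ℝ} : Phi b = Phi a + ∫ x in a..b, phi x := by
  have h := intervalIntegral.integral_Iic_sub_Iic
    (μ := volume) (f := phi) (a := a) (b := b)
    integrable_phi.integrableOn integrable_phi.integrableOn
  rw [Phi_eq_Iic, Phi_eq_Iic]
  linarith

lemma Phi_mono {a b : ℝ} (hab : a ≤ b) : Phi a ≤ Phi b := by
  have h := Phi_add (a := a) (b := b)
  have h2 : 0 ≤ ∫ x in a..b, phi x :=
    intervalIntegral.integral_nonneg hab (fun x _ => phi_nonneg x)
  linarith

lemma Phi_nonneg (t : ℝ) : 0 ≤ Phi t :=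
  setIntegral_nonneg measurableSet_Iio (fun x _ => phi_nonneg x)

lemma phi_mono_neg {x y : ℝ} (hxy : x ≤ y) (hy : y ≤ 0) : phi x ≤ phi y := by
  unfold phi
  have : Real.exp (-x^2/2) ≤ Real.exp (-y^2/2) := by
    apply Real.exp_le_exp.2; nlinarith
  have h0 : (0:ℝ) ≤ (Real.sqrt (2*Real.pi))⁻¹ := by positivity
  nlinarith

lemma integ_ub {a b U : ℝ} (hab : a ≤ b) (hb : b ≤ 0) (hU : phi b ≤ U) :
    (∫ x in a..b, phi x) ≤ (b - a) * U := by
  have h : (∫ x in a..b, phi x) ≤ ∫ _x in a..b, U := by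
    apply intervalIntegral.integral_mono_on hab (phi_ii a b) intervalIntegrable_const
    intro x hx
    exact le_trans (phi_mono_neg hx.2 hb) hU
  simpa using h

lemma integ_lb {a b L : ℝ} (hab : a ≤ b) (hb : b ≤ 0) (hL : L ≤ phi a) :
    (b - a) * L ≤ ∫ x in a..b, phi x := by
  have h : (∫ _x in a..b, L) ≤ ∫ x in a..b, phi x := by
    apply intervalIntegral.integral_mono_on hab intervalIntegrable_const (phi_ii a b)
    intro x hx
    exact le_trans hL (phi_mono_neg hx.1 (le_trans hx.2 hb))
  simpa using h


lemma exp_taylor_lb {r : ℝ} (h0 : 0 ≤ r) :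
    1 + r + r^2/2 + r^3/6 + r^4/24 + r^5/120 ≤ Real.exp r := by
  have h := Real.sum_le_exp_of_nonneg h0 6
  simp [Finset.sum_range_succ, Nat.factorial] at h
  nlinarith [h]

lemma exp_taylor_ub {r : ℝ} (h0 : 0 ≤ r) (h1 : r ≤ 1) :
    Real.exp r ≤ 1 + r + r^2/2 + r^3/6 + r^4/24 + r^5/120 + r^6*7/4320 := by
  have h := Real.exp_bound (x := r) (by rw [abs_of_nonneg h0]; exact h1)
    (n := 6) (by norm_num)
  rw [abs_of_nonneg h0] at h
  rw [abs_sub_le_iff] at h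
  have h2 := h.1
  simp [Finset.sum_range_succ, Nat.factorial] at h2
  nlinarith [h2]

lemma exp_lb_num {s E : ℝ} (k : ℕ) (r : ℝ) (hs : s = k + r) (h0 : 0 ≤ r)
    (hE : E ≤ (2.7182818283 : ℝ)^k * (1 + r + r^2/2 + r^3/6 + r^4/24 + r^5/120)) :
    E ≤ Real.exp s := by
  have hsplit : Real.exp s = (Real.exp 1)^k * Real.exp r := by
    rw [← Real.exp_nat_mul, ← Real.exp_add, hs, mul_one]
  have e1 : (2.7182818283 : ℝ) ≤ Real.exp 1 := le_of_lt Real.exp_one_gt_d9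
  have hpow : (2.7182818283 : ℝ)^k ≤ (Real.exp 1)^k :=
    pow_le_pow_left₀ (by norm_num) e1 k
  have ht := exp_taylor_lb h0
  have htp : (0:ℝ) ≤ 1 + r + r^2/2 + r^3/6 + r^4/24 + r^5/120 := by positivity
  calc E ≤ (2.7182818283 : ℝ)^k * (1 + r + r^2/2 + r^3/6 + r^4/24 + r^5/120) := hE
    _ ≤ (Real.exp 1)^k * Real.exp r := by
        apply mul_le_mul hpow ht htp (by positivity)
    _ = Real.exp s := hsplit.symm

lemma exp_ub_num {s E : ℝ} (k : ℕ) (r : ℝ) (hs : s = k + r) (h0 : 0 ≤ r) (h1 : r ≤ 1)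
    (hE : (2.7182818286 : ℝ)^k * (1 + r + r^2/2 + r^3/6 + r^4/24 + r^5/120 + r^6*7/4320) ≤ E) :
    Real.exp s ≤ E := by
  have hsplit : Real.exp s = (Real.exp 1)^k * Real.exp r := by
    rw [← Real.exp_nat_mul, ← Real.exp_add, hs, mul_one]
  have e1 : Real.exp 1 ≤ (2.7182818286 : ℝ) := le_of_lt Real.exp_one_lt_d9
  have hpow : (Real.exp 1)^k ≤ (2.7182818286 : ℝ)^k :=
    pow_le_pow_left₀ (Real.exp_pos 1).le e1 k
  have ht := exp_taylor_ub h0 h1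
  calc Real.exp s = (Real.exp 1)^k * Real.exp r := hsplit
    _ ≤ (2.7182818286 : ℝ)^k * (1 + r + r^2/2 + r^3/6 + r^4/24 + r^5/120 + r^6*7/4320) := by
        apply mul_le_mul hpow ht (Real.exp_pos r).le (by positivity)
    _ ≤ E := hE

lemma sqrt_two_pi_lb : (2.5066 : ℝ) ≤ Real.sqrt (2*Real.pi) := by
  have h : (2.5066 : ℝ)^2 ≤ 2*Real.pi := by nlinarith [Real.pi_gt_d6]
  nlinarith [Real.sq_sqrt (by positivity : (0:ℝ) ≤ 2*Real.pi),
    Real.sqrt_nonneg (2*Real.pi)]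

lemma sqrt_two_pi_ub : Real.sqrt (2*Real.pi) ≤ (2.5067 : ℝ) := by
  have h : 2*Real.pi ≤ (2.5067 : ℝ)^2 := by nlinarith [Real.pi_lt_d6]
  nlinarith [Real.sq_sqrt (by positivity : (0:ℝ) ≤ 2*Real.pi),
    Real.sqrt_nonneg (2*Real.pi)]

lemma phi_ub' (t : ℝ) (k : ℕ) (r E U : ℝ)
    (ht : t^2/2 = k + r) (h0 : 0 ≤ r)
    (hE : E ≤ (2.7182818283 : ℝ)^k * (1 + r + r^2/2 + r^3/6 + r^4/24 + r^5/120))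
    (hE0 : 0 < E) (hU : 1 ≤ U * (E * 2.5066)) : phi t ≤ U := by
  have hexp : E ≤ Real.exp (t^2/2) := exp_lb_num k r ht h0 hE
  have hsq := sqrt_two_pi_lb
  have hX : Real.exp (-t^2/2) * Real.exp (t^2/2) = 1 := by
    rw [← Real.exp_add, show -t^2/2 + t^2/2 = 0 by ring, Real.exp_zero]
  have hS : (0:ℝ) < Real.sqrt (2*Real.pi) := lt_of_lt_of_le (by norm_num) sqrt_two_pi_lb
  have hU0 : 0 < U := by nlinarith
  unfold phi
  rw [inv_mul_le_iff₀ hS]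
  have he : Real.exp (-t^2/2) ≤ 1/E := by
    have := Real.exp_pos (-t^2/2)
    rw [le_div_iff₀ hE0]
    nlinarith [Real.exp_pos (t^2/2)]
  have : 1/E ≤ 2.5066 * U := by
    rw [div_le_iff₀ hE0]; nlinarith
  nlinarith

lemma phi_lb' (t : ℝ) (k : ℕ) (r E L : ℝ)
    (ht : t^2/2 = k + r) (h0 : 0 ≤ r) (h1 : r ≤ 1)
    (hE : (2.7182818286 : ℝ)^k * (1 + r + r^2/2 + r^3/6 + r^4/24 + r^5/120 + r^6*7/4320) ≤ E)
    (hL : 0 ≤ L) (hL2 : L * (E * 2.5067) ≤ 1) : L ≤ phi t := by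
  have hexp : Real.exp (t^2/2) ≤ E := exp_ub_num k r ht h0 h1 hE
  have hsq := sqrt_two_pi_ub
  have hX : Real.exp (-t^2/2) * Real.exp (t^2/2) = 1 := by
    rw [← Real.exp_add, show -t^2/2 + t^2/2 = 0 by ring, Real.exp_zero]
  have hS : (0:ℝ) < Real.sqrt (2*Real.pi) := lt_of_lt_of_le (by norm_num) sqrt_two_pi_lb
  have hE0 : (0:ℝ) < E := lt_of_lt_of_le (Real.exp_pos _) hexp
  have he : 1/E ≤ Real.exp (-t^2/2) := by
    rw [div_le_iff₀ hE0]
    nlinarith [Real.exp_pos (-t^2/2)]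
  have h2 : L ≤ 1/(E*2.5067) := by
    rw [le_div_iff₀ (by positivity)]
    linarith
  have hs' : (2.5067:ℝ)⁻¹ ≤ (Real.sqrt (2*Real.pi))⁻¹ := by
    apply inv_anti₀ hS hsq
  unfold phi
  calc L ≤ 1/(E*2.5067) := h2
    _ = (2.5067:ℝ)⁻¹ * (1/E) := by ring
    _ ≤ (Real.sqrt (2*Real.pi))⁻¹ * Real.exp (-t^2/2) := by
        apply mul_le_mul hs' he (by positivity) (by positivity)

lemma Phi_mills {L : ℝ} (hL : L < 0) : Phi L ≤ phi L / (-L) := by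
  have hint : IntegrableOn (fun x => x * Real.exp (-x^2/2)) (Set.Iic L) := by
    have h := integrable_mul_exp_neg_mul_sq (by norm_num : (0:ℝ) < 1/2)
    refine (Integrable.congr h ?_).integrableOn
    filter_upwards with x
    congr 1
    ring
  have key : ∫ x in Set.Iic L, x * Real.exp (-x^2/2) = -Real.exp (-L^2/2) := by
    have hderiv : ∀ x ∈ Set.Iic L,
        HasDerivAt (fun y => -Real.exp (-y^2/2)) (x * Real.exp (-x^2/2)) x := by
      intro x _
      have h1 : HasDerivAt (fun y : ℝ => -y^2/2) (-x) x := by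
        have := (hasDerivAt_pow 2 x).neg.div_const 2
        refine this.congr_deriv ?_
        push_cast; ring
      have h2 := (h1.exp).neg
      refine h2.congr_deriv ?_
      ring
    have htend : Tendsto (fun y : ℝ => -Real.exp (-y^2/2)) atBot (nhds 0) := by
      rw [← neg_zero]
      apply Tendsto.neg
      apply Real.tendsto_exp_atBot.comp
      have h1 : Tendsto (fun y : ℝ => y^2) atBot atTop := by
        refine Tendsto.congr (f₁ := fun y : ℝ => (-y)^2) (by intro y; ring) ?_
        exact (tendsto_pow_atTop (two_ne_zero)).comp tendsto_neg_atBot_atTop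
      have h2 := (tendsto_neg_atTop_atBot.comp h1).atBot_div_const (by norm_num : (0:ℝ) < 2)
      refine h2.congr ?_
      intro y
      simp [neg_div]
    have := integral_Iic_of_hasDerivAt_of_tendsto' hderiv hint htend
    simpa using this
  have mono : Phi L ≤ ∫ x in Set.Iic L, (x/L) * phi x := by
    rw [Phi_eq_Iic]
    apply setIntegral_mono_on integrable_phi.integrableOn ?_ measurableSet_Iic
    · intro x hx
      have hx' : x ≤ L := hx
      have h1 : 1 ≤ x/L := by
        rw [le_div_iff_of_neg hL]
        simpa using hx'
      nlinarith [phi_nonneg x]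
    · have : (fun x => (x/L) * phi x)
          = fun x => ((Real.sqrt (2*Real.pi))⁻¹ / L) * (x * Real.exp (-x^2/2)) := by
        funext x; unfold phi; ring
      rw [this]
      exact hint.const_mul _
  have calc2 : ∫ x in Set.Iic L, (x/L) * phi x = phi L / (-L) := by
    have : (fun x => (x/L) * phi x)
        = fun x => ((Real.sqrt (2*Real.pi))⁻¹ / L) * (x * Real.exp (-x^2/2)) := by
      funext x; unfold phi; ring
    rw [this, MeasureTheory.integral_const_mul, key]
    unfold phi
    field_simp
  linarith [mono, calc2.symm.le, calc2.le]

lemma sqrt_ub {a b : ℝ} (hb : 0 ≤ b) (h : a ≤ b^2) : Real.sqrt a ≤ b := by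
  calc Real.sqrt a ≤ Real.sqrt (b^2) := Real.sqrt_le_sqrt h
    _ = b := Real.sqrt_sq hb

lemma sqrt_lb {a b : ℝ} (h : b^2 ≤ a) (hb : 0 ≤ b) : b ≤ Real.sqrt a := by
  calc b = Real.sqrt (b^2) := (Real.sqrt_sq hb).symm
    _ ≤ Real.sqrt a := Real.sqrt_le_sqrt h

lemma key1 : Phi (-313/125 : ℝ) + Phi (-28621/10000 : ℝ) < 2 * Phi (-2599/1000 : ℝ) := by
  have u1_0 : phi (-25673/10000 : ℝ) ≤ (14780579151/1000000000000 : ℝ) := by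
    apply phi_ub' _ 3 (59102929/200000000 : ℝ) (134956410181/5000000000 : ℝ) _ (by norm_num) (by norm_num) (by norm_num) (by norm_num) (by norm_num)
  have u1_1 : phi (-25357/10000 : ℝ) ≤ (8010824697/500000000000 : ℝ) := by
    apply phi_ub' _ 3 (42977449/200000000 : ℝ) (24900481261/1000000000 : ℝ) _ (by norm_num) (by norm_num) (by norm_num) (by norm_num) (by norm_num)
  have u1_2 : phi (-313/125 : ℝ) ≤ (4338487011/250000000000 : ℝ) := by
    apply phi_ub' _ 3 (4219/31250 : ℝ) (45977639151/2000000000 : ℝ) _ (by norm_num) (by norm_num) (by norm_num) (by norm_num) (by norm_num)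
  have l2_0 : (1659780833/250000000000 : ℝ) ≤ phi (-28621/10000 : ℝ) := by
    apply phi_lb' _ 4 (19161641/200000000 : ℝ) (60087882887/1000000000 : ℝ) _ (by norm_num) (by norm_num) (by norm_num) (by norm_num) (by norm_num) (by norm_num)
  have l2_1 : (7997546881/1000000000000 : ℝ) ≤ phi (-27963/10000 : ℝ) := by
    apply phi_lb' _ 3 (181929369/200000000 : ℝ) (15588016831/312500000 : ℝ) _ (by norm_num) (by norm_num) (by norm_num) (by norm_num) (by norm_num) (by norm_num)
  have l2_2 : (191794981/20000000000 : ℝ) ≤ phi (-13653/5000 : ℝ) := by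
    apply phi_lb' _ 3 (36404409/50000000 : ℝ) (83199437893/2000000000 : ℝ) _ (by norm_num) (by norm_num) (by norm_num) (by norm_num) (by norm_num) (by norm_num)
  have l2_3 : (715780341/62500000000 : ℝ) ≤ phi (-3331/1250 : ℝ) := by
    apply phi_lb' _ 3 (1720561/3125000 : ℝ) (348335622687/10000000000 : ℝ) _ (by norm_num) (by norm_num) (by norm_num) (by norm_num) (by norm_num) (by norm_num)
  have l3_0 : (13653362649/1000000000000 : ℝ) ≤ phi (-1299/500 : ℝ) := by
    apply phi_lb' _ 3 (187401/500000 : ℝ) (146092532481/5000000000 : ℝ) _ (by norm_num) (by norm_num) (by norm_num) (by norm_num) (by norm_num) (by norm_num)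
  have l3_1 : (16021008173/1000000000000 : ℝ) ≤ phi (-25357/10000 : ℝ) := by
    apply phi_lb' _ 3 (42977449/200000000 : ℝ) (249004844739/10000000000 : ℝ) _ (by norm_num) (by norm_num) (by norm_num) (by norm_num) (by norm_num) (by norm_num)
  have l3_2 : (18721769791/1000000000000 : ℝ) ≤ phi (-4947/2000 : ℝ) := by
    apply phi_lb' _ 3 (472809/8000000 : ℝ) (213083949711/10000000000 : ℝ) _ (by norm_num) (by norm_num) (by norm_num) (by norm_num) (by norm_num) (by norm_num)
  have l3_3 : (21798451257/1000000000000 : ℝ) ≤ phi (-1507/625 : ℝ) := by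
    apply phi_lb' _ 2 (708549/781250 : ℝ) (5719025353/312500000 : ℝ) _ (by norm_num) (by norm_num) (by norm_num) (by norm_num) (by norm_num) (by norm_num)
  have l3_4 : (25276668833/1000000000000 : ℝ) ≤ phi (-2349/1000 : ℝ) := by
    apply phi_lb' _ 2 (1517801/2000000 : ℝ) (157825727713/10000000000 : ℝ) _ (by norm_num) (by norm_num) (by norm_num) (by norm_num) (by norm_num) (by norm_num)
  have l3_5 : (29203448121/1000000000000 : ℝ) ≤ phi (-22867/10000 : ℝ) := by
    apply phi_lb' _ 2 (122899689/200000000 : ℝ) (136604028273/10000000000 : ℝ) _ (by norm_num) (by norm_num) (by norm_num) (by norm_num) (by norm_num) (by norm_num)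
  have um : phi (-1299/500 : ℝ) ≤ (1706743689/125000000000 : ℝ) := by
    apply phi_ub' _ 3 (187401/500000 : ℝ) (292184162651/10000000000 : ℝ) _ (by norm_num) (by norm_num) (by norm_num) (by norm_num) (by norm_num)
  have p1_0 : (∫ x in (-2599/1000 : ℝ)..(-25673/10000 : ℝ), phi x) ≤ ((-25673/10000 : ℝ) - (-2599/1000 : ℝ)) * (14780579151/1000000000000 : ℝ) :=
    integ_ub (by norm_num) (by norm_num) u1_0
  have p1_1 : (∫ x in (-25673/10000 : ℝ)..(-25357/10000 : ℝ), phi x) ≤ ((-25357/10000 : ℝ) - (-25673/10000 : ℝ)) * (8010824697/500000000000 : ℝ) :=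
    integ_ub (by norm_num) (by norm_num) u1_1
  have p1_2 : (∫ x in (-25357/10000 : ℝ)..(-313/125 : ℝ), phi x) ≤ ((-313/125 : ℝ) - (-25357/10000 : ℝ)) * (4338487011/250000000000 : ℝ) :=
    integ_ub (by norm_num) (by norm_num) u1_2
  have p2_0 : ((-27963/10000 : ℝ) - (-28621/10000 : ℝ)) * (1659780833/250000000000 : ℝ) ≤ ∫ x in (-28621/10000 : ℝ)..(-27963/10000 : ℝ), phi x :=
    integ_lb (by norm_num) (by norm_num) l2_0
  have p2_1 : ((-13653/5000 : ℝ) - (-27963/10000 : ℝ)) * (7997546881/1000000000000 : ℝ) ≤ ∫ x in (-27963/10000 : ℝ)..(-13653/5000 : ℝ), phi x :=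
    integ_lb (by norm_num) (by norm_num) l2_1
  have p2_2 : ((-3331/1250 : ℝ) - (-13653/5000 : ℝ)) * (191794981/20000000000 : ℝ) ≤ ∫ x in (-13653/5000 : ℝ)..(-3331/1250 : ℝ), phi x :=
    integ_lb (by norm_num) (by norm_num) l2_2
  have p2_3 : ((-2599/1000 : ℝ) - (-3331/1250 : ℝ)) * (715780341/62500000000 : ℝ) ≤ ∫ x in (-3331/1250 : ℝ)..(-2599/1000 : ℝ), phi x :=
    integ_lb (by norm_num) (by norm_num) l2_3
  have p3_0 : ((-25357/10000 : ℝ) - (-1299/500 : ℝ)) * (13653362649/1000000000000 : ℝ) ≤ ∫ x in (-1299/500 : ℝ)..(-25357/10000 : ℝ), phi x :=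
    integ_lb (by norm_num) (by norm_num) l3_0
  have p3_1 : ((-4947/2000 : ℝ) - (-25357/10000 : ℝ)) * (16021008173/1000000000000 : ℝ) ≤ ∫ x in (-25357/10000 : ℝ)..(-4947/2000 : ℝ), phi x :=
    integ_lb (by norm_num) (by norm_num) l3_1
  have p3_2 : ((-1507/625 : ℝ) - (-4947/2000 : ℝ)) * (18721769791/1000000000000 : ℝ) ≤ ∫ x in (-4947/2000 : ℝ)..(-1507/625 : ℝ), phi x :=
    integ_lb (by norm_num) (by norm_num) l3_2
  have p3_3 : ((-2349/1000 : ℝ) - (-1507/625 : ℝ)) * (21798451257/1000000000000 : ℝ) ≤ ∫ x in (-1507/625 : ℝ)..(-2349/1000 : ℝ), phi x :=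
    integ_lb (by norm_num) (by norm_num) l3_3
  have p3_4 : ((-22867/10000 : ℝ) - (-2349/1000 : ℝ)) * (25276668833/1000000000000 : ℝ) ≤ ∫ x in (-2349/1000 : ℝ)..(-22867/10000 : ℝ), phi x :=
    integ_lb (by norm_num) (by norm_num) l3_4
  have p3_5 : ((-5561/2500 : ℝ) - (-22867/10000 : ℝ)) * (29203448121/1000000000000 : ℝ) ≤ ∫ x in (-22867/10000 : ℝ)..(-5561/2500 : ℝ), phi x :=
    integ_lb (by norm_num) (by norm_num) l3_5
  have sp1_1 : (∫ x in (-2599/1000 : ℝ)..(-25673/10000 : ℝ), phi x) + (∫ x in (-25673/10000 : ℝ)..(-25357/10000 : ℝ), phi x) = ∫ x in (-2599/1000 : ℝ)..(-25357/10000 : ℝ), phi x :=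
    intervalIntegral.integral_add_adjacent_intervals (phi_ii _ _) (phi_ii _ _)
  have sp1_2 : (∫ x in (-2599/1000 : ℝ)..(-25357/10000 : ℝ), phi x) + (∫ x in (-25357/10000 : ℝ)..(-313/125 : ℝ), phi x) = ∫ x in (-2599/1000 : ℝ)..(-313/125 : ℝ), phi x :=
    intervalIntegral.integral_add_adjacent_intervals (phi_ii _ _) (phi_ii _ _)
  have sp2_1 : (∫ x in (-28621/10000 : ℝ)..(-27963/10000 : ℝ), phi x) + (∫ x in (-27963/10000 : ℝ)..(-13653/5000 : ℝ), phi x) = ∫ x in (-28621/10000 : ℝ)..(-13653/5000 : ℝ), phi x :=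
    intervalIntegral.integral_add_adjacent_intervals (phi_ii _ _) (phi_ii _ _)
  have sp2_2 : (∫ x in (-28621/10000 : ℝ)..(-13653/5000 : ℝ), phi x) + (∫ x in (-13653/5000 : ℝ)..(-3331/1250 : ℝ), phi x) = ∫ x in (-28621/10000 : ℝ)..(-3331/1250 : ℝ), phi x :=
    intervalIntegral.integral_add_adjacent_intervals (phi_ii _ _) (phi_ii _ _)
  have sp2_3 : (∫ x in (-28621/10000 : ℝ)..(-3331/1250 : ℝ), phi x) + (∫ x in (-3331/1250 : ℝ)..(-2599/1000 : ℝ), phi x) = ∫ x in (-28621/10000 : ℝ)..(-2599/1000 : ℝ), phi x :=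
    intervalIntegral.integral_add_adjacent_intervals (phi_ii _ _) (phi_ii _ _)
  have sp3_1 : (∫ x in (-1299/500 : ℝ)..(-25357/10000 : ℝ), phi x) + (∫ x in (-25357/10000 : ℝ)..(-4947/2000 : ℝ), phi x) = ∫ x in (-1299/500 : ℝ)..(-4947/2000 : ℝ), phi x :=
    intervalIntegral.integral_add_adjacent_intervals (phi_ii _ _) (phi_ii _ _)
  have sp3_2 : (∫ x in (-1299/500 : ℝ)..(-4947/2000 : ℝ), phi x) + (∫ x in (-4947/2000 : ℝ)..(-1507/625 : ℝ), phi x) = ∫ x in (-1299/500 : ℝ)..(-1507/625 : ℝ), phi x :=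
    intervalIntegral.integral_add_adjacent_intervals (phi_ii _ _) (phi_ii _ _)
  have sp3_3 : (∫ x in (-1299/500 : ℝ)..(-1507/625 : ℝ), phi x) + (∫ x in (-1507/625 : ℝ)..(-2349/1000 : ℝ), phi x) = ∫ x in (-1299/500 : ℝ)..(-2349/1000 : ℝ), phi x :=
    intervalIntegral.integral_add_adjacent_intervals (phi_ii _ _) (phi_ii _ _)
  have sp3_4 : (∫ x in (-1299/500 : ℝ)..(-2349/1000 : ℝ), phi x) + (∫ x in (-2349/1000 : ℝ)..(-22867/10000 : ℝ), phi x) = ∫ x in (-1299/500 : ℝ)..(-22867/10000 : ℝ), phi x :=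
    intervalIntegral.integral_add_adjacent_intervals (phi_ii _ _) (phi_ii _ _)
  have sp3_5 : (∫ x in (-1299/500 : ℝ)..(-22867/10000 : ℝ), phi x) + (∫ x in (-22867/10000 : ℝ)..(-5561/2500 : ℝ), phi x) = ∫ x in (-1299/500 : ℝ)..(-5561/2500 : ℝ), phi x :=
    intervalIntegral.integral_add_adjacent_intervals (phi_ii _ _) (phi_ii _ _)
  have eX : Phi (-313/125 : ℝ) = Phi (-2599/1000 : ℝ) + ∫ x in (-2599/1000 : ℝ)..(-313/125 : ℝ), phi x := Phi_add
  have eY : Phi (-2599/1000 : ℝ) = Phi (-28621/10000 : ℝ) + ∫ x in (-28621/10000 : ℝ)..(-2599/1000 : ℝ), phi x := Phi_add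
  have eZ : Phi (-5561/2500 : ℝ) = Phi (-1299/500 : ℝ) + ∫ x in (-1299/500 : ℝ)..(-5561/2500 : ℝ), phi x := Phi_add
  have hK1 : Phi (-313/125 : ℝ) + Phi (-28621/10000 : ℝ) < 2 * Phi (-2599/1000 : ℝ) := by
    linarith
  exact hK1

lemma key2 : 2 * Phi (-1299/500 : ℝ) < Phi (-5561/2500 : ℝ) := by
  have u1_0 : phi (-25673/10000 : ℝ) ≤ (14780579151/1000000000000 : ℝ) := by
    apply phi_ub' _ 3 (59102929/200000000 : ℝ) (134956410181/5000000000 : ℝ) _ (by norm_num) (by norm_num) (by norm_num) (by norm_num) (by norm_num)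
  have u1_1 : phi (-25357/10000 : ℝ) ≤ (8010824697/500000000000 : ℝ) := by
    apply phi_ub' _ 3 (42977449/200000000 : ℝ) (24900481261/1000000000 : ℝ) _ (by norm_num) (by norm_num) (by norm_num) (by norm_num) (by norm_num)
  have u1_2 : phi (-313/125 : ℝ) ≤ (4338487011/250000000000 : ℝ) := by
    apply phi_ub' _ 3 (4219/31250 : ℝ) (45977639151/2000000000 : ℝ) _ (by norm_num) (by norm_num) (by norm_num) (by norm_num) (by norm_num)
  have l2_0 : (1659780833/250000000000 : ℝ) ≤ phi (-28621/10000 : ℝ) := by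
    apply phi_lb' _ 4 (19161641/200000000 : ℝ) (60087882887/1000000000 : ℝ) _ (by norm_num) (by norm_num) (by norm_num) (by norm_num) (by norm_num) (by norm_num)
  have l2_1 : (7997546881/1000000000000 : ℝ) ≤ phi (-27963/10000 : ℝ) := by
    apply phi_lb' _ 3 (181929369/200000000 : ℝ) (15588016831/312500000 : ℝ) _ (by norm_num) (by norm_num) (by norm_num) (by norm_num) (by norm_num) (by norm_num)
  have l2_2 : (191794981/20000000000 : ℝ) ≤ phi (-13653/5000 : ℝ) := by
    apply phi_lb' _ 3 (36404409/50000000 : ℝ) (83199437893/2000000000 : ℝ) _ (by norm_num) (by norm_num) (by norm_num) (by norm_num) (by norm_num) (by norm_num)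
  have l2_3 : (715780341/62500000000 : ℝ) ≤ phi (-3331/1250 : ℝ) := by
    apply phi_lb' _ 3 (1720561/3125000 : ℝ) (348335622687/10000000000 : ℝ) _ (by norm_num) (by norm_num) (by norm_num) (by norm_num) (by norm_num) (by norm_num)
  have l3_0 : (13653362649/1000000000000 : ℝ) ≤ phi (-1299/500 : ℝ) := by
    apply phi_lb' _ 3 (187401/500000 : ℝ) (146092532481/5000000000 : ℝ) _ (by norm_num) (by norm_num) (by norm_num) (by norm_num) (by norm_num) (by norm_num)
  have l3_1 : (16021008173/1000000000000 : ℝ) ≤ phi (-25357/10000 : ℝ) := by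
    apply phi_lb' _ 3 (42977449/200000000 : ℝ) (249004844739/10000000000 : ℝ) _ (by norm_num) (by norm_num) (by norm_num) (by norm_num) (by norm_num) (by norm_num)
  have l3_2 : (18721769791/1000000000000 : ℝ) ≤ phi (-4947/2000 : ℝ) := by
    apply phi_lb' _ 3 (472809/8000000 : ℝ) (213083949711/10000000000 : ℝ) _ (by norm_num) (by norm_num) (by norm_num) (by norm_num) (by norm_num) (by norm_num)
  have l3_3 : (21798451257/1000000000000 : ℝ) ≤ phi (-1507/625 : ℝ) := by
    apply phi_lb' _ 2 (708549/781250 : ℝ) (5719025353/312500000 : ℝ) _ (by norm_num) (by norm_num) (by norm_num) (by norm_num) (by norm_num) (by norm_num)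
  have l3_4 : (25276668833/1000000000000 : ℝ) ≤ phi (-2349/1000 : ℝ) := by
    apply phi_lb' _ 2 (1517801/2000000 : ℝ) (157825727713/10000000000 : ℝ) _ (by norm_num) (by norm_num) (by norm_num) (by norm_num) (by norm_num) (by norm_num)
  have l3_5 : (29203448121/1000000000000 : ℝ) ≤ phi (-22867/10000 : ℝ) := by
    apply phi_lb' _ 2 (122899689/200000000 : ℝ) (136604028273/10000000000 : ℝ) _ (by norm_num) (by norm_num) (by norm_num) (by norm_num) (by norm_num) (by norm_num)
  have um : phi (-1299/500 : ℝ) ≤ (1706743689/125000000000 : ℝ) := by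
    apply phi_ub' _ 3 (187401/500000 : ℝ) (292184162651/10000000000 : ℝ) _ (by norm_num) (by norm_num) (by norm_num) (by norm_num) (by norm_num)
  have p1_0 : (∫ x in (-2599/1000 : ℝ)..(-25673/10000 : ℝ), phi x) ≤ ((-25673/10000 : ℝ) - (-2599/1000 : ℝ)) * (14780579151/1000000000000 : ℝ) :=
    integ_ub (by norm_num) (by norm_num) u1_0
  have p1_1 : (∫ x in (-25673/10000 : ℝ)..(-25357/10000 : ℝ), phi x) ≤ ((-25357/10000 : ℝ) - (-25673/10000 : ℝ)) * (8010824697/500000000000 : ℝ) :=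
    integ_ub (by norm_num) (by norm_num) u1_1
  have p1_2 : (∫ x in (-25357/10000 : ℝ)..(-313/125 : ℝ), phi x) ≤ ((-313/125 : ℝ) - (-25357/10000 : ℝ)) * (4338487011/250000000000 : ℝ) :=
    integ_ub (by norm_num) (by norm_num) u1_2
  have p2_0 : ((-27963/10000 : ℝ) - (-28621/10000 : ℝ)) * (1659780833/250000000000 : ℝ) ≤ ∫ x in (-28621/10000 : ℝ)..(-27963/10000 : ℝ), phi x :=
    integ_lb (by norm_num) (by norm_num) l2_0
  have p2_1 : ((-13653/5000 : ℝ) - (-27963/10000 : ℝ)) * (7997546881/1000000000000 : ℝ) ≤ ∫ x in (-27963/10000 : ℝ)..(-13653/5000 : ℝ), phi x :=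
    integ_lb (by norm_num) (by norm_num) l2_1
  have p2_2 : ((-3331/1250 : ℝ) - (-13653/5000 : ℝ)) * (191794981/20000000000 : ℝ) ≤ ∫ x in (-13653/5000 : ℝ)..(-3331/1250 : ℝ), phi x :=
    integ_lb (by norm_num) (by norm_num) l2_2
  have p2_3 : ((-2599/1000 : ℝ) - (-3331/1250 : ℝ)) * (715780341/62500000000 : ℝ) ≤ ∫ x in (-3331/1250 : ℝ)..(-2599/1000 : ℝ), phi x :=
    integ_lb (by norm_num) (by norm_num) l2_3
  have p3_0 : ((-25357/10000 : ℝ) - (-1299/500 : ℝ)) * (13653362649/1000000000000 : ℝ) ≤ ∫ x in (-1299/500 : ℝ)..(-25357/10000 : ℝ), phi x :=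
    integ_lb (by norm_num) (by norm_num) l3_0
  have p3_1 : ((-4947/2000 : ℝ) - (-25357/10000 : ℝ)) * (16021008173/1000000000000 : ℝ) ≤ ∫ x in (-25357/10000 : ℝ)..(-4947/2000 : ℝ), phi x :=
    integ_lb (by norm_num) (by norm_num) l3_1
  have p3_2 : ((-1507/625 : ℝ) - (-4947/2000 : ℝ)) * (18721769791/1000000000000 : ℝ) ≤ ∫ x in (-4947/2000 : ℝ)..(-1507/625 : ℝ), phi x :=
    integ_lb (by norm_num) (by norm_num) l3_2
  have p3_3 : ((-2349/1000 : ℝ) - (-1507/625 : ℝ)) * (21798451257/1000000000000 : ℝ) ≤ ∫ x in (-1507/625 : ℝ)..(-2349/1000 : ℝ), phi x :=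
    integ_lb (by norm_num) (by norm_num) l3_3
  have p3_4 : ((-22867/10000 : ℝ) - (-2349/1000 : ℝ)) * (25276668833/1000000000000 : ℝ) ≤ ∫ x in (-2349/1000 : ℝ)..(-22867/10000 : ℝ), phi x :=
    integ_lb (by norm_num) (by norm_num) l3_4
  have p3_5 : ((-5561/2500 : ℝ) - (-22867/10000 : ℝ)) * (29203448121/1000000000000 : ℝ) ≤ ∫ x in (-22867/10000 : ℝ)..(-5561/2500 : ℝ), phi x :=
    integ_lb (by norm_num) (by norm_num) l3_5
  have sp1_1 : (∫ x in (-2599/1000 : ℝ)..(-25673/10000 : ℝ), phi x) + (∫ x in (-25673/10000 : ℝ)..(-25357/10000 : ℝ), phi x) = ∫ x in (-2599/1000 : ℝ)..(-25357/10000 : ℝ), phi x :=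
    intervalIntegral.integral_add_adjacent_intervals (phi_ii _ _) (phi_ii _ _)
  have sp1_2 : (∫ x in (-2599/1000 : ℝ)..(-25357/10000 : ℝ), phi x) + (∫ x in (-25357/10000 : ℝ)..(-313/125 : ℝ), phi x) = ∫ x in (-2599/1000 : ℝ)..(-313/125 : ℝ), phi x :=
    intervalIntegral.integral_add_adjacent_intervals (phi_ii _ _) (phi_ii _ _)
  have sp2_1 : (∫ x in (-28621/10000 : ℝ)..(-27963/10000 : ℝ), phi x) + (∫ x in (-27963/10000 : ℝ)..(-13653/5000 : ℝ), phi x) = ∫ x in (-28621/10000 : ℝ)..(-13653/5000 : ℝ), phi x :=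
    intervalIntegral.integral_add_adjacent_intervals (phi_ii _ _) (phi_ii _ _)
  have sp2_2 : (∫ x in (-28621/10000 : ℝ)..(-13653/5000 : ℝ), phi x) + (∫ x in (-13653/5000 : ℝ)..(-3331/1250 : ℝ), phi x) = ∫ x in (-28621/10000 : ℝ)..(-3331/1250 : ℝ), phi x :=
    intervalIntegral.integral_add_adjacent_intervals (phi_ii _ _) (phi_ii _ _)
  have sp2_3 : (∫ x in (-28621/10000 : ℝ)..(-3331/1250 : ℝ), phi x) + (∫ x in (-3331/1250 : ℝ)..(-2599/1000 : ℝ), phi x) = ∫ x in (-28621/10000 : ℝ)..(-2599/1000 : ℝ), phi x :=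
    intervalIntegral.integral_add_adjacent_intervals (phi_ii _ _) (phi_ii _ _)
  have sp3_1 : (∫ x in (-1299/500 : ℝ)..(-25357/10000 : ℝ), phi x) + (∫ x in (-25357/10000 : ℝ)..(-4947/2000 : ℝ), phi x) = ∫ x in (-1299/500 : ℝ)..(-4947/2000 : ℝ), phi x :=
    intervalIntegral.integral_add_adjacent_intervals (phi_ii _ _) (phi_ii _ _)
  have sp3_2 : (∫ x in (-1299/500 : ℝ)..(-4947/2000 : ℝ), phi x) + (∫ x in (-4947/2000 : ℝ)..(-1507/625 : ℝ), phi x) = ∫ x in (-1299/500 : ℝ)..(-1507/625 : ℝ), phi x :=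
    intervalIntegral.integral_add_adjacent_intervals (phi_ii _ _) (phi_ii _ _)
  have sp3_3 : (∫ x in (-1299/500 : ℝ)..(-1507/625 : ℝ), phi x) + (∫ x in (-1507/625 : ℝ)..(-2349/1000 : ℝ), phi x) = ∫ x in (-1299/500 : ℝ)..(-2349/1000 : ℝ), phi x :=
    intervalIntegral.integral_add_adjacent_intervals (phi_ii _ _) (phi_ii _ _)
  have sp3_4 : (∫ x in (-1299/500 : ℝ)..(-2349/1000 : ℝ), phi x) + (∫ x in (-2349/1000 : ℝ)..(-22867/10000 : ℝ), phi x) = ∫ x in (-1299/500 : ℝ)..(-22867/10000 : ℝ), phi x :=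
    intervalIntegral.integral_add_adjacent_intervals (phi_ii _ _) (phi_ii _ _)
  have sp3_5 : (∫ x in (-1299/500 : ℝ)..(-22867/10000 : ℝ), phi x) + (∫ x in (-22867/10000 : ℝ)..(-5561/2500 : ℝ), phi x) = ∫ x in (-1299/500 : ℝ)..(-5561/2500 : ℝ), phi x :=
    intervalIntegral.integral_add_adjacent_intervals (phi_ii _ _) (phi_ii _ _)
  have eX : Phi (-313/125 : ℝ) = Phi (-2599/1000 : ℝ) + ∫ x in (-2599/1000 : ℝ)..(-313/125 : ℝ), phi x := Phi_add
  have eY : Phi (-2599/1000 : ℝ) = Phi (-28621/10000 : ℝ) + ∫ x in (-28621/10000 : ℝ)..(-2599/1000 : ℝ), phi x := Phi_add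
  have eZ : Phi (-5561/2500 : ℝ) = Phi (-1299/500 : ℝ) + ∫ x in (-1299/500 : ℝ)..(-5561/2500 : ℝ), phi x := Phi_add
  have hm : Phi (-1299/500 : ℝ) ≤ phi (-1299/500 : ℝ) / (1299/500 : ℝ) := by
    have h := Phi_mills (L := (-1299/500 : ℝ)) (by norm_num)
    rwa [show -(-1299/500 : ℝ) = (1299/500 : ℝ) by norm_num] at h
  have hK2 : 2 * Phi (-1299/500 : ℝ) < Phi (-5561/2500 : ℝ) := by
    rw [eZ]
    have h2 : Phi (-1299/500 : ℝ) ≤ (1706743689/125000000000 : ℝ) / (1299/500 : ℝ) := by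
      calc Phi (-1299/500 : ℝ) ≤ phi (-1299/500 : ℝ) / (1299/500 : ℝ) := hm
        _ ≤ (1706743689/125000000000 : ℝ) / (1299/500 : ℝ) := by gcongr
    linarith
  exact hK2

noncomputable def g (μ Δ : ℝ) (n m : ℕ) : ℝ :=
  (1 / 2) * (Phi (((m : ℝ) * Δ - ((n : ℝ) + m) * μ)
                  / Real.sqrt (((n : ℝ) + m) * ((n : ℝ) + m + 1)))
           + Phi ((-((m : ℝ) * Δ) - ((n : ℝ) + m) * μ)
                  / Real.sqrt (((n : ℝ) + m) * ((n : ℝ) + m + 1))))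

theorem stmt4 :
    ∃ (μ Δ : ℝ) (n m₁ m₂ : ℕ), 0 < μ ∧ 0 < Δ ∧ 1 ≤ n ∧ 0 < m₁ ∧ m₁ < m₂ ∧
      g μ Δ n m₁ < g μ Δ n 0 ∧ g μ Δ n 0 < g μ Δ n m₂ := by
  have h20pos : (0:ℝ) < Real.sqrt 20 := Real.sqrt_pos.mpr (by norm_num)
  have h12pos : (0:ℝ) < Real.sqrt 12 := Real.sqrt_pos.mpr (by norm_num)
  have h2862pos : (0:ℝ) < Real.sqrt 2862 := Real.sqrt_pos.mpr (by norm_num)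
  have h20u : Real.sqrt 20 ≤ 4.4722 := sqrt_ub (by norm_num) (by norm_num)
  have h12u : Real.sqrt 12 ≤ 3.4642 := sqrt_ub (by norm_num) (by norm_num)
  have h12l : (3.4641:ℝ) ≤ Real.sqrt 12 := sqrt_lb (by norm_num) (by norm_num)
  have h2862l : (53.4976:ℝ) ≤ Real.sqrt 2862 := sqrt_lb (by norm_num) (by norm_num)
  refine ⟨3, 4/5, 3, 1, 50, by norm_num, by norm_num, by norm_num, by norm_num, by norm_num, ?_, ?_⟩
  · unfold g
    push_cast
    norm_num
    have hx : Phi (-(56/5)/Real.sqrt 20) ≤ Phi (-313/125 : ℝ) := by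
      apply Phi_mono
      rw [div_le_iff₀ h20pos]
      nlinarith
    have hy : Phi (-(64/5)/Real.sqrt 20) ≤ Phi (-28621/10000 : ℝ) := by
      apply Phi_mono
      rw [div_le_iff₀ h20pos]
      nlinarith
    have ha : Phi (-2599/1000 : ℝ) ≤ Phi (-9/Real.sqrt 12) := by
      apply Phi_mono
      rw [le_div_iff₀ h12pos]
      nlinarith
    linarith [key1, hx, hy, ha]
  · unfold g
    push_cast
    norm_num
    have hb : Phi (-9/Real.sqrt 12) ≤ Phi (-1299/500 : ℝ) := by
      apply Phi_mono
      rw [div_le_iff₀ h12pos]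
      nlinarith
    have hx2 : Phi (-5561/2500 : ℝ) ≤ Phi (-119/Real.sqrt 2862) := by
      apply Phi_mono
      rw [le_div_iff₀ h2862pos]
      nlinarith
    have hy2 : 0 ≤ Phi (-199/Real.sqrt 2862) := Phi_nonneg _
    linarith [key2, hb, hx2, hy2]
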